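/- arXiv:2307.11905 — 3 statements merged into one kernel-verified Lean document; each statement's English description precedes it below -/
import Mathlib

section
/- The link product of two positive semidefinite operators is positive semidefinite: if A ∈ L(H₁⊗H₂) and B ∈ L(H₂⊗H₃) satisfy A ≥ 0 and B ≥ 0, then A ⋆ B := tr₂[(A^{T₂} ⊗ 1₃)(1₁ ⊗ B)] ≥ 0. -/
open Matrix
open scoped Kronecker ComplexOrder

/-- The link product `A ⋆ B := tr₂[(A^{T₂} ⊗ 1₃)(1₁ ⊗ B)]` of Choi matrices
`A ∈ L(H₁⊗H₂)` and `B ∈ L(H₂⊗H₃)`, written entrywise. -/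
noncomputable def linkProd {α β γ : Type*} [Fintype β]
    (A : Matrix (α × β) (α × β) ℂ) (B : Matrix (β × γ) (β × γ) ℂ) :
    Matrix (α × γ) (α × γ) ℂ :=
  fun p q => ∑ k : β, ∑ l : β, A (p.1, l) (q.1, k) * B (l, p.2) (k, q.2)

/-- Auxiliary: reversing the order of a quadruple sum. -/
lemma swap4 {α β γ δ M : Type*} [AddCommMonoid M] [Fintype α] [Fintype β] [Fintype γ] [Fintype δ]
    (f : α → β → γ → δ → M) :
    (∑ a, ∑ b, ∑ c, ∑ d, f a b c d) = ∑ d, ∑ c, ∑ b, ∑ a, f a b c d := by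
  have h1 : (∑ a, ∑ b, ∑ c, ∑ d, f a b c d)
      = ∑ x : α × β × γ × δ, f x.1 x.2.1 x.2.2.1 x.2.2.2 := by
    simp [Fintype.sum_prod_type]
  have h2 : (∑ d, ∑ c, ∑ b, ∑ a, f a b c d)
      = ∑ y : δ × γ × β × α, f y.2.2.2 y.2.2.1 y.2.1 y.1 := by
    simp [Fintype.sum_prod_type]
  rw [h1, h2]
  exact Fintype.sum_equiv
    ⟨fun x => (x.2.2.2, x.2.2.1, x.2.1, x.1), fun y => (y.2.2.2, y.2.2.1, y.2.1, y.1),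
      fun x => rfl, fun y => rfl⟩ _ _ (fun x => rfl)

/-- the link product of two positive semidefinite operators is
positive semidefinite. -/
theorem link_product_posSemidef
    {H1 H2 H3 : Type*} [Fintype H1] [Fintype H2] [Fintype H3]
    (A : Matrix (H1 × H2) (H1 × H2) ℂ) (B : Matrix (H2 × H3) (H2 × H3) ℂ)
    (hA : A.PosSemidef) (hB : B.PosSemidef) :
    (linkProd A B).PosSemidef := by
  obtain ⟨C, rfl⟩ : ∃ C : Matrix (H1 × H2) (H1 × H2) ℂ, A = Cᴴ * C := by
    classical
    open scoped MatrixOrder Matrix.Norms.L2Operator in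
    exact CStarAlgebra.nonneg_iff_eq_star_mul_self.mp hA.nonneg
  obtain ⟨D, rfl⟩ : ∃ D : Matrix (H2 × H3) (H2 × H3) ℂ, B = Dᴴ * D := by
    classical
    open scoped MatrixOrder Matrix.Norms.L2Operator in
    exact CStarAlgebra.nonneg_iff_eq_star_mul_self.mp hB.nonneg
  set E : Matrix ((H1 × H2) × (H2 × H3)) (H1 × H3) ℂ :=
    fun m q => ∑ k : H2, C m.1 (q.1, k) * D m.2 (k, q.2) with hE
  have key : linkProd (Cᴴ * C) (Dᴴ * D) = Eᴴ * E := by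
    ext p q
    show (∑ k : H2, ∑ l : H2, (Cᴴ * C) (p.1, l) (q.1, k) * (Dᴴ * D) (l, p.2) (k, q.2)) = _
    rw [show (Eᴴ * E) p q = ∑ m : H1 × H2, ∑ n : H2 × H3,
        (star (∑ l : H2, C m (p.1, l) * D n (l, p.2))) *
        (∑ k : H2, C m (q.1, k) * D n (k, q.2)) by
      rw [Matrix.mul_apply]; simp only [Matrix.conjTranspose_apply]
      simp [hE, Fintype.sum_prod_type]]
    simp only [Matrix.mul_apply, Matrix.conjTranspose_apply, star_sum, star_mul',
      Finset.mul_sum, Finset.sum_mul]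
    rw [swap4 (f := fun k l n m => star (C m (p.1, l)) * C m (q.1, k) *
      (star (D n (l, p.2)) * D n (k, q.2)))]
    congr 1; ext m; congr 1; ext n; rw [Finset.sum_comm]; congr 1; ext l; congr 1; ext k; ring
  rw [key]
  exact Matrix.posSemidef_conjTranspose_mul_self E
end

section
/- If A is the Choi matrix of a completely positive map 𝒜 : L(H₁) → L(H₂) and B is the Choi matrix of a completely positive map ℬ : L(H₂) → L(H₃), then the link product A ⋆ B (contraction over H₂) is the Choi matrix of the composition ℬ ∘ 𝒜. -/
open Matrix
open scoped Kronecker ComplexOrder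

/-- The Choi matrix `K = Σ_{ij} |i⟩⟨j| ⊗ 𝒦(|i⟩⟨j|)` of a linear map
`𝒦 : L(H_i) → L(H_o)`, written entrywise. -/
noncomputable def choi {α β : Type*} [Fintype α] [DecidableEq α]
    (K : Matrix α α ℂ →ₗ[ℂ] Matrix β β ℂ) : Matrix (α × β) (α × β) ℂ :=
  fun p q => K (Matrix.single p.1 q.1 1) p.2 q.2

/-- if `A` is the Choi matrix of a completely positive map
`𝒜 : L(H₁) → L(H₂)` and `B` is the Choi matrix of a completely positive map
`ℬ : L(H₂) → L(H₃)` (complete positivity expressed, via Choi's theorem, as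
positive semidefiniteness of the Choi matrices), then the link product
`A ⋆ B` (contraction over `H₂`) is the Choi matrix of the composition `ℬ ∘ 𝒜`. -/
theorem choi_comp_eq_link_product
    {H1 H2 H3 : Type*} [Fintype H1] [DecidableEq H1] [Fintype H2] [DecidableEq H2]
    [Fintype H3]
    (𝒜 : Matrix H1 H1 ℂ →ₗ[ℂ] Matrix H2 H2 ℂ)
    (ℬ : Matrix H2 H2 ℂ →ₗ[ℂ] Matrix H3 H3 ℂ)
    (hA : (choi 𝒜).PosSemidef) (hB : (choi ℬ).PosSemidef) :
    choi (ℬ ∘ₗ 𝒜) = linkProd (choi 𝒜) (choi ℬ) := by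
  funext p q
  simp only [choi, linkProd, LinearMap.comp_apply]
  conv_lhs => rw [Matrix.matrix_eq_sum_single (𝒜 (Matrix.single p.1 q.1 1))]
  rw [map_sum]
  rw [Matrix.sum_apply, Finset.sum_comm]
  refine Finset.sum_congr rfl fun k _ => ?_
  rw [map_sum, Matrix.sum_apply]
  refine Finset.sum_congr rfl fun l _ => ?_
  have : Matrix.single k l (𝒜 (Matrix.single p.1 q.1 1) k l)
      = (𝒜 (Matrix.single p.1 q.1 1) k l) • Matrix.single k l 1 := by
    rw [Matrix.smul_single, smul_eq_mul, mul_one]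
  rw [this, _root_.map_smul, Matrix.smul_apply, smul_eq_mul]
end

section
/- The three-time process in which the input at t₁ is swapped with a fiducial environment qubit |0⟩, the environment is measured in the computational basis (an entanglement-breaking channel), and then a CNOT controlled on the environment acts on the system before t₃, can signal from t₁ to t₃: with the system traced at t₁ and t₂ and a fixed state σ fed in at t₂, feeding |0⟩⟨0| at t₁ yields output σ at t₃ while feeding |1⟩⟨1| at t₁ yields X σ X at t₃; hence this process violates the non-signalling condition tr_{2^i}[C] = 1_{1^o}/d ⊗ tr_{2^i 1^o}[C] and therefore admits no mixed memoryless realisation. -/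
open Matrix
open scoped ComplexOrder

/-- Index type of the three-time process Choi operator: `(3ⁱ, 2ᵒ, 2ⁱ, 1ᵒ, 1ⁱ)`,
all qubits. -/
abbrev ProcIdx : Type := Fin 2 × Fin 2 × Fin 2 × Fin 2 × Fin 2

/-- Rank-one projector `|α⟩⟨α|` on a qubit. -/
noncomputable def ketbra (α : Fin 2) : Matrix (Fin 2) (Fin 2) ℂ :=
  fun i j => if i = α ∧ j = α then 1 else 0

/-- The Pauli `X` (`NOT`) gate. -/
noncomputable def pauliX : Matrix (Fin 2) (Fin 2) ℂ :=
  fun i j => if i = j + 1 then 1 else 0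

/-- The Choi operator of the three-time process of Lemma 3 / Fig. 3: the state
input at `t₁` is swapped with a fiducial environment qubit `|0⟩`, the
environment is measured in the computational basis (an entanglement-breaking
channel), and a CNOT controlled on the environment acts on the system before
`t₃`; finally the environment is traced out.  The measurement outcome `z`
selects the effect `|z⟩⟨z|` on `1ᵒ`, prepares `|0⟩⟨0|` on `2ⁱ`, and applies
`X^z` between `2ᵒ` and `3ⁱ`. -/
noncomputable def procC (ρ : Matrix (Fin 2) (Fin 2) ℂ) : Matrix ProcIdx ProcIdx ℂ :=
  fun p q =>
    ∑ z : Fin 2,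
      (if p.1 = p.2.1 + z then 1 else 0) * (if q.1 = q.2.1 + z then 1 else 0) *
      (if p.2.2.1 = 0 ∧ q.2.2.1 = 0 then 1 else 0) *
      (if p.2.2.2.1 = z ∧ q.2.2.2.1 = z then 1 else 0) *
      ρ p.2.2.2.2 q.2.2.2.2

/-- The state output at `t₃` when the system is discarded at `t₁` and `t₂`,
a state `σ` is fed in at `t₂` and a state `τ` is fed in at `t₁`. -/
noncomputable def outState (ρ τ σ : Matrix (Fin 2) (Fin 2) ℂ) :
    Matrix (Fin 2) (Fin 2) ℂ :=
  fun a a' =>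
    ∑ b : Fin 2, ∑ b' : Fin 2, ∑ c : Fin 2, ∑ d : Fin 2, ∑ d' : Fin 2, ∑ e : Fin 2,
      procC ρ (a, b, c, d, e) (a', b', c, d', e) * τ d d' * σ b b'

/-- Auxiliary: the process violates the non-signalling condition. -/
lemma procC_not_nonsignalling (ρ : Matrix (Fin 2) (Fin 2) ℂ) (hρtr : ρ.trace = 1) :
    ¬ (∀ (a3 b2 d1 e1 a3' b2' d1' e1' : Fin 2),
        ∑ c : Fin 2, procC ρ (a3, b2, c, d1, e1) (a3', b2', c, d1', e1')
          = (if d1 = d1' then (1 : ℂ) else 0) * (1 / 2) *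
            ∑ d : Fin 2, ∑ c : Fin 2,
              procC ρ (a3, b2, c, d, e1) (a3', b2', c, d, e1')) := by
  intro h
  have h0 := h 0 0 0 0 0 0 0 0
  have h1 := h 0 0 0 1 0 0 0 1
  simp only [Matrix.trace, Fin.sum_univ_two, Matrix.diag] at hρtr
  simp [procC, Fin.sum_univ_two] at h0 h1
  have e0 : ρ 0 0 = 0 := by linear_combination 2*h0
  have e1 : ρ 1 1 = 0 := by linear_combination 2*h1
  rw [e0, e1] at hρtr
  norm_num at hρtr

/-- the swap–measure–CNOT process can signal from `t₁` to `t₃`: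
feeding `|0⟩⟨0|` at `t₁` outputs `σ` at `t₃` while feeding `|1⟩⟨1|` outputs
`XσX`; hence the process violates the non-signalling condition
`tr_{2ⁱ}[C] = (1_{1ᵒ}/2) ⊗ tr_{2ⁱ1ᵒ}[C]` and admits no mixed memoryless
realisation. -/
theorem swap_measure_cnot_process_signals
    (ρ : Matrix (Fin 2) (Fin 2) ℂ) (hρ : ρ.PosSemidef) (hρtr : ρ.trace = 1) :
    (∀ σ : Matrix (Fin 2) (Fin 2) ℂ,
        outState ρ (ketbra 0) σ = σ ∧
        outState ρ (ketbra 1) σ = pauliX * σ * pauliX) ∧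
    ¬ (∀ (a3 b2 d1 e1 a3' b2' d1' e1' : Fin 2),
        ∑ c : Fin 2, procC ρ (a3, b2, c, d1, e1) (a3', b2', c, d1', e1')
          = (if d1 = d1' then (1 : ℂ) else 0) * (1 / 2) *
            ∑ d : Fin 2, ∑ c : Fin 2,
              procC ρ (a3, b2, c, d, e1) (a3', b2', c, d, e1')) ∧
    ¬ (∃ (n : ℕ) (p : Fin n → ℝ)
          (L2 : Fin n → Matrix (Fin 2 × Fin 2) (Fin 2 × Fin 2) ℂ)
          (L1 : Fin n → Matrix (Fin 2 × Fin 2) (Fin 2 × Fin 2) ℂ)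
          (ρs : Fin n → Matrix (Fin 2) (Fin 2) ℂ),
          (∀ x, 0 ≤ p x) ∧ (∑ x, p x = 1) ∧
          (∀ x, (L2 x).PosSemidef) ∧
          (∀ x (b b' : Fin 2), ∑ a : Fin 2, L2 x (a, b) (a, b')
            = if b = b' then (1 : ℂ) else 0) ∧
          (∀ x, (L1 x).PosSemidef) ∧
          (∀ x (d d' : Fin 2), ∑ c : Fin 2, L1 x (c, d) (c, d')
            = if d = d' then (1 : ℂ) else 0) ∧
          (∀ x, (ρs x).PosSemidef) ∧ (∀ x, (ρs x).trace = 1) ∧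
          (∀ p' q' : ProcIdx, procC ρ p' q' =
            ∑ x, (p x : ℂ) * L2 x (p'.1, p'.2.1) (q'.1, q'.2.1) *
              L1 x (p'.2.2.1, p'.2.2.2.1) (q'.2.2.1, q'.2.2.2.1) *
              ρs x p'.2.2.2.2 q'.2.2.2.2)) := by
  refine ⟨?_, procC_not_nonsignalling ρ hρtr, ?_⟩
  · intro σ
    constructor
    · have htr := hρtr
      simp only [Matrix.trace, Fin.sum_univ_two, Matrix.diag] at htr
      funext a a'
      fin_cases a <;> fin_cases a' <;>
        simp [outState, procC, ketbra, Fin.sum_univ_two, Fin.isValue] <;>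
        linear_combination σ _ _ * htr
    · have htr := hρtr
      simp only [Matrix.trace, Fin.sum_univ_two, Matrix.diag] at htr
      funext a a'
      fin_cases a <;> fin_cases a' <;>
        simp [outState, procC, ketbra, pauliX, Matrix.mul_apply, Fin.sum_univ_two,
          Fin.isValue] <;>
        linear_combination σ _ _ * htr
  · rintro ⟨n, p, L2, L1, ρs, hp, hpsum, hL2psd, hL2tr, hL1psd, hL1tr, hρspsd,
      hρstr, hdec⟩
    apply procC_not_nonsignalling ρ hρtr
    intro a3 b2 d1 e1 a3' b2' d1' e1'
    have main : ∀ (u u' : Fin 2),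
        ∑ c : Fin 2, procC ρ (a3, b2, c, u, e1) (a3', b2', c, u', e1')
          = (if u = u' then (1 : ℂ) else 0) *
            ∑ x, (p x : ℂ) * L2 x (a3, b2) (a3', b2') * ρs x e1 e1' := by
      intro u u'
      rw [Fin.sum_univ_two]
      simp only [hdec]
      rw [← Finset.sum_add_distrib, Finset.mul_sum]
      refine Finset.sum_congr rfl fun x _ => ?_
      have ht := hL1tr x u u'
      rw [Fin.sum_univ_two] at ht
      linear_combination (p x : ℂ) * L2 x (a3, b2) (a3', b2') * ρs x e1 e1' * ht
    rw [main d1 d1']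
    have : ∑ d : Fin 2, ∑ c : Fin 2,
        procC ρ (a3, b2, c, d, e1) (a3', b2', c, d, e1')
        = 2 * ∑ x, (p x : ℂ) * L2 x (a3, b2) (a3', b2') * ρs x e1 e1' := by
      rw [Fin.sum_univ_two, main 0 0, main 1 1]
      simp; ring
    rw [this]
    ring
end
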